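/- arXiv:math/0511127 — 2 statements merged into one kernel-verified Lean document; each statement's English description precedes it below -/
import Mathlib

section
/- For every almost periodic function φ : ℝ → ℂ, the Bohr mean value M(φ) = lim_{T→∞} (1/T) ∫_0^T φ(x) dx exists. -/
open Filter Set

/-- A function `φ : ℝ → ℂ` is almost periodic in Bohr's sense: it is continuous and,
for every `ε > 0`, there is `l > 0` such that every interval of length `l` contains an
`ε`-translation number `τ` of `φ`. -/
def BohrAlmostPeriodic (φ : ℝ → ℂ) : Prop :=
  Continuous φ ∧
    ∀ ε > (0 : ℝ), ∃ l > (0 : ℝ), ∀ a : ℝ, ∃ τ ∈ Set.Icc a (a + l),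
      ∀ x : ℝ, ‖φ (x + τ) - φ x‖ ≤ ε

/-- An almost periodic function is bounded. -/
lemma BohrAlmostPeriodic.bounded {φ : ℝ → ℂ} (hφ : BohrAlmostPeriodic φ) :
    ∃ C > (0:ℝ), ∀ x : ℝ, ‖φ x‖ ≤ C := by
  obtain ⟨hc, hap⟩ := hφ
  obtain ⟨l, hl, htr⟩ := hap 1 one_pos
  obtain ⟨C₁, hC₁⟩ := (isCompact_Icc (a := (0:ℝ)) (b := l)).exists_bound_of_continuousOn
    hc.continuousOn
  refine ⟨max C₁ 0 + 1, by positivity, fun x => ?_⟩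
  obtain ⟨τ, hτ, htr'⟩ := htr (-x)
  have hx : x + τ ∈ Icc (0:ℝ) l := ⟨by linarith [hτ.1], by linarith [hτ.2]⟩
  have h1 : ‖φ x‖ = ‖φ (x + τ) - (φ (x + τ) - φ x)‖ := by ring_nf
  rw [h1]
  calc ‖φ (x + τ) - (φ (x + τ) - φ x)‖ ≤ ‖φ (x + τ)‖ + ‖φ (x + τ) - φ x‖ :=
        norm_sub_le _ _
    _ ≤ max C₁ 0 + 1 := add_le_add (le_trans (hC₁ _ hx) (le_max_left _ _)) (htr' x)

/-- Comparison of the integral over `[a, a+T]` with the integral over `[0, T]`. -/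
lemma shift_estimate {φ : ℝ → ℂ} (hc : Continuous φ) {C ε l : ℝ}
    (hbound : ∀ x, ‖φ x‖ ≤ C)
    (htr : ∀ a : ℝ, ∃ τ ∈ Set.Icc a (a + l), ∀ x : ℝ, ‖φ (x + τ) - φ x‖ ≤ ε)
    (a T : ℝ) (hT : 0 ≤ T) :
    ‖(∫ x in a..(a + T), φ x) - ∫ x in (0:ℝ)..T, φ x‖ ≤ ε * T + 2 * C * l := by
  obtain ⟨τ, hτ, htr'⟩ := htr a
  have hint : ∀ u v : ℝ, IntervalIntegrable φ MeasureTheory.volume u v := fun u v =>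
    hc.intervalIntegrable u v
  have hintτ : IntervalIntegrable (fun x => φ (x + τ)) MeasureTheory.volume 0 T :=
    (hc.comp (continuous_add_right τ)).intervalIntegrable 0 T
  -- decompose
  have hdec : (∫ x in a..(a + T), φ x) =
      (∫ x in a..τ, φ x) + (∫ x in τ..(τ + T), φ x) + ∫ x in (τ + T)..(a + T), φ x := by
    rw [intervalIntegral.integral_add_adjacent_intervals (hint a τ) (hint τ (τ + T)),
      intervalIntegral.integral_add_adjacent_intervals (hint a (τ + T)) (hint (τ + T) (a + T))]
  have hshift : (∫ x in τ..(τ + T), φ x) = ∫ x in (0:ℝ)..T, φ (x + τ) := by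
    rw [intervalIntegral.integral_comp_add_right (a := (0:ℝ)) (b := T) (fun x => φ x) τ]
    norm_num [add_comm]
  have hmid : ‖(∫ x in τ..(τ + T), φ x) - ∫ x in (0:ℝ)..T, φ x‖ ≤ ε * T := by
    rw [hshift, ← intervalIntegral.integral_sub hintτ (hint 0 T)]
    have := intervalIntegral.norm_integral_le_of_norm_le_const
      (C := ε) (f := fun x => φ (x + τ) - φ x) (a := (0:ℝ)) (b := T)
      (fun x _ => htr' x)
    simpa [abs_of_nonneg hT] using this
  have hC0 : 0 ≤ C := le_trans (norm_nonneg _) (hbound 0)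
  have hτl : τ - a ≤ l := by linarith [hτ.2]
  have hτa : 0 ≤ τ - a := by linarith [hτ.1]
  have h1 : ‖∫ x in a..τ, φ x‖ ≤ C * l := by
    calc ‖∫ x in a..τ, φ x‖ ≤ C * |τ - a| :=
          intervalIntegral.norm_integral_le_of_norm_le_const (fun x _ => hbound x)
      _ ≤ C * l := by rw [abs_of_nonneg hτa]; exact mul_le_mul_of_nonneg_left hτl hC0
  have h2 : ‖∫ x in (τ + T)..(a + T), φ x‖ ≤ C * l := by
    calc ‖∫ x in (τ + T)..(a + T), φ x‖ ≤ C * |a + T - (τ + T)| :=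
          intervalIntegral.norm_integral_le_of_norm_le_const (fun x _ => hbound x)
      _ ≤ C * l := by
          have : |a + T - (τ + T)| = τ - a := by rw [abs_sub_comm]; rw [abs_of_nonneg]; ring_nf; linarith
          rw [this]; exact mul_le_mul_of_nonneg_left hτl hC0
  calc ‖(∫ x in a..(a + T), φ x) - ∫ x in (0:ℝ)..T, φ x‖
      = ‖((∫ x in τ..(τ + T), φ x) - ∫ x in (0:ℝ)..T, φ x) + (∫ x in a..τ, φ x)
          + ∫ x in (τ + T)..(a + T), φ x‖ := by rw [hdec]; ring_nf
    _ ≤ ‖((∫ x in τ..(τ + T), φ x) - ∫ x in (0:ℝ)..T, φ x) + (∫ x in a..τ, φ x)‖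
          + ‖∫ x in (τ + T)..(a + T), φ x‖ := norm_add_le _ _
    _ ≤ (‖(∫ x in τ..(τ + T), φ x) - ∫ x in (0:ℝ)..T, φ x‖ + ‖∫ x in a..τ, φ x‖)
          + ‖∫ x in (τ + T)..(a + T), φ x‖ := by gcongr; exact norm_add_le _ _
    _ ≤ (ε * T + C * l) + C * l := by gcongr
    _ = ε * T + 2 * C * l := by ring

/-- Comparison with integer multiples. -/
lemma multiple_estimate {φ : ℝ → ℂ} (hc : Continuous φ) {C ε l : ℝ}
    (hbound : ∀ x, ‖φ x‖ ≤ C)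
    (htr : ∀ a : ℝ, ∃ τ ∈ Set.Icc a (a + l), ∀ x : ℝ, ‖φ (x + τ) - φ x‖ ≤ ε)
    (T : ℝ) (hT : 0 ≤ T) (n : ℕ) :
    ‖(∫ x in (0:ℝ)..((n : ℝ) * T), φ x) - (n : ℂ) * ∫ x in (0:ℝ)..T, φ x‖
      ≤ (n : ℝ) * (ε * T + 2 * C * l) := by
  induction n with
  | zero => simp
  | succ n ih =>
    have hint : ∀ u v : ℝ, IntervalIntegrable φ MeasureTheory.volume u v := fun u v =>
      hc.intervalIntegrable u v
    have hsplit : (∫ x in (0:ℝ)..(((n:ℝ) + 1) * T), φ x) =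
        (∫ x in (0:ℝ)..((n:ℝ) * T), φ x) + ∫ x in ((n:ℝ)*T)..((n:ℝ)*T + T), φ x := by
      rw [intervalIntegral.integral_add_adjacent_intervals (hint 0 ((n:ℝ)*T))
        (hint ((n:ℝ)*T) ((n:ℝ)*T + T))]
      ring_nf
    have hstep := shift_estimate hc hbound htr ((n:ℝ) * T) T hT
    push_cast
    calc ‖(∫ x in (0:ℝ)..(((n:ℝ) + 1) * T), φ x) - ((n : ℂ) + 1) * ∫ x in (0:ℝ)..T, φ x‖
        = ‖((∫ x in (0:ℝ)..((n:ℝ) * T), φ x) - (n : ℂ) * ∫ x in (0:ℝ)..T, φ x)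
            + ((∫ x in ((n:ℝ)*T)..((n:ℝ)*T + T), φ x) - ∫ x in (0:ℝ)..T, φ x)‖ := by
          rw [hsplit]; ring_nf
      _ ≤ ‖(∫ x in (0:ℝ)..((n:ℝ) * T), φ x) - (n : ℂ) * ∫ x in (0:ℝ)..T, φ x‖
            + ‖(∫ x in ((n:ℝ)*T)..((n:ℝ)*T + T), φ x) - ∫ x in (0:ℝ)..T, φ x‖ :=
          norm_add_le _ _
      _ ≤ (n : ℝ) * (ε * T + 2 * C * l) + (ε * T + 2 * C * l) := add_le_add ih hstep
      _ = ((n : ℝ) + 1) * (ε * T + 2 * C * l) := by ring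

/-- The Bohr mean value `M(φ) = lim_{T→∞} (1/T) ∫_0^T φ(x) dx` exists for every
almost periodic function `φ`. -/
theorem bohr_mean_value_exists (φ : ℝ → ℂ) (hφ : BohrAlmostPeriodic φ) :
    ∃ M : ℂ, Tendsto (fun T : ℝ => (1 / (T : ℂ)) * ∫ x in (0:ℝ)..T, φ x) atTop (nhds M) := by
  obtain ⟨C, hC, hbound⟩ := hφ.bounded
  obtain ⟨hc, hap⟩ := hφ
  have hint : ∀ u v : ℝ, IntervalIntegrable φ MeasureTheory.volume u v := fun u v =>
    hc.intervalIntegrable u v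
  set A : ℝ → ℂ := fun T => (1 / (T : ℂ)) * ∫ x in (0:ℝ)..T, φ x with hA
  -- main Cauchy-type estimate
  have main : ∀ ε > (0:ℝ), ∃ l > (0:ℝ), ∀ S T : ℝ, 0 < T → T ≤ S →
      ‖A S - A T‖ ≤ ε + 2 * C * l / T + 2 * C * T / S := by
    intro ε hε
    obtain ⟨l, hl, htr⟩ := hap ε hε
    refine ⟨l, hl, fun S T hT hTS => ?_⟩
    have hS : 0 < S := lt_of_lt_of_le hT hTS
    set n : ℕ := ⌊S / T⌋₊ with hn
    have hn1 : 1 ≤ n := Nat.le_floor (by rw [le_div_iff₀ hT]; simpa using hTS)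
    have hnT : (n : ℝ) * T ≤ S := by
      rw [← le_div_iff₀ hT]
      exact Nat.floor_le (by positivity)
    have hSnT : S < ((n : ℝ) + 1) * T := by
      rw [← div_lt_iff₀ hT]
      exact_mod_cast Nat.lt_floor_add_one (S / T)
    -- E : error vs multiples; R : remainder
    have hE := multiple_estimate hc hbound htr T hT.le n
    have hR : ‖∫ x in ((n:ℝ)*T)..S, φ x‖ ≤ C * T := by
      calc ‖∫ x in ((n:ℝ)*T)..S, φ x‖ ≤ C * |S - (n:ℝ)*T| :=
            intervalIntegral.norm_integral_le_of_norm_le_const (fun x _ => hbound x)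
        _ ≤ C * T := by
            rw [abs_of_nonneg (by linarith)]
            apply mul_le_mul_of_nonneg_left _ hC.le
            nlinarith
    have hIT : ‖∫ x in (0:ℝ)..T, φ x‖ ≤ C * T := by
      have := intervalIntegral.norm_integral_le_of_norm_le_const
        (C := C) (f := φ) (a := (0:ℝ)) (b := T) (fun x _ => hbound x)
      simpa [abs_of_nonneg hT.le] using this
    have hsplit : (∫ x in (0:ℝ)..S, φ x) =
        (∫ x in (0:ℝ)..((n:ℝ)*T), φ x) + ∫ x in ((n:ℝ)*T)..S, φ x :=
      (intervalIntegral.integral_add_adjacent_intervals (hint 0 ((n:ℝ)*T))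
        (hint ((n:ℝ)*T) S)).symm
    -- now the algebra
    have hSne : (S : ℂ) ≠ 0 := by exact_mod_cast hS.ne'
    have hTne : (T : ℂ) ≠ 0 := by exact_mod_cast hT.ne'
    have hAS : A S - A T = ((n : ℂ) / S - 1 / T) * (∫ x in (0:ℝ)..T, φ x)
        + (1 / S) * (((∫ x in (0:ℝ)..((n:ℝ)*T), φ x) - (n : ℂ) * ∫ x in (0:ℝ)..T, φ x)
            + ∫ x in ((n:ℝ)*T)..S, φ x) := by
      simp only [hA]
      rw [hsplit]
      field_simp
      ring
    rw [hAS]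
    have habs : ‖((n : ℂ) / S - 1 / T)‖ ≤ 1 / S := by
      have hcast : ((n : ℂ) / S - 1 / T) = ((((n:ℝ) / S - 1 / T) : ℝ) : ℂ) := by
        push_cast; ring
      rw [hcast, Complex.norm_real, Real.norm_eq_abs, abs_le]
      constructor
      · have h1 : 1 / T ≤ ((n:ℝ) + 1) / S := by
          rw [div_le_div_iff₀ hT hS]; nlinarith
        have h2 : ((n:ℝ) + 1) / S = (n:ℝ) / S + 1 / S := by ring
        rw [h2] at h1; linarith
      · have h1 : (n:ℝ) / S ≤ 1 / T := by
          rw [div_le_div_iff₀ hS hT]; nlinarith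
        have h2 : (0:ℝ) ≤ 1 / S := by positivity
        linarith
    have h1S : ‖(1 : ℂ) / S‖ = 1 / S := by
      rw [show ((1:ℂ)/S) = (((1/S : ℝ)):ℂ) by push_cast; ring, Complex.norm_real,
        Real.norm_eq_abs, abs_of_nonneg (by positivity)]
    calc ‖((n : ℂ) / S - 1 / T) * (∫ x in (0:ℝ)..T, φ x)
        + (1 / S) * (((∫ x in (0:ℝ)..((n:ℝ)*T), φ x) - (n : ℂ) * ∫ x in (0:ℝ)..T, φ x)
            + ∫ x in ((n:ℝ)*T)..S, φ x)‖
        ≤ ‖((n : ℂ) / S - 1 / T)‖ * ‖(∫ x in (0:ℝ)..T, φ x)‖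
          + ‖(1:ℂ) / S‖ * (‖(∫ x in (0:ℝ)..((n:ℝ)*T), φ x) - (n : ℂ) * ∫ x in (0:ℝ)..T, φ x‖
            + ‖∫ x in ((n:ℝ)*T)..S, φ x‖) := by
          refine le_trans (norm_add_le _ _) (add_le_add (norm_mul_le _ _) ?_)
          exact le_trans (norm_mul_le _ _)
            (mul_le_mul_of_nonneg_left (norm_add_le _ _) (norm_nonneg _))
      _ ≤ (1 / S) * (C * T) + (1 / S) * (((n:ℝ) * (ε * T + 2 * C * l)) + C * T) := by
          rw [h1S]
          refine add_le_add (mul_le_mul habs hIT (norm_nonneg _) (by positivity)) ?_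
          exact mul_le_mul_of_nonneg_left (add_le_add hE hR) (by positivity)
      _ ≤ ε + 2 * C * l / T + 2 * C * T / S := by
          have hnS : (n : ℝ) / S ≤ 1 / T := by
            rw [div_le_div_iff₀ hS hT]; nlinarith
          have key : (1 / S) * ((n:ℝ) * (ε * T + 2 * C * l)) ≤ ε + 2 * C * l / T := by
            have h3 : (1 / S) * ((n:ℝ) * (ε * T + 2 * C * l))
                = ((n:ℝ) / S) * (ε * T + 2 * C * l) := by ring
            rw [h3]
            calc ((n:ℝ) / S) * (ε * T + 2 * C * l) ≤ (1 / T) * (ε * T + 2 * C * l) := by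
                  apply mul_le_mul_of_nonneg_right hnS (by positivity)
              _ = ε + 2 * C * l / T := by field_simp
          have expand : (1 / S) * (C * T) + (1 / S) * (((n:ℝ) * (ε * T + 2 * C * l)) + C * T)
              = (1 / S) * ((n:ℝ) * (ε * T + 2 * C * l)) + 2 * C * T / S := by ring
          rw [expand]
          linarith [key]
  -- Cauchy along atTop
  have hcauchy : Cauchy (Filter.map A atTop) := by
    rw [Metric.cauchy_iff]
    refine ⟨Filter.map_neBot, fun δ hδ => ?_⟩
    have hε : (0:ℝ) < δ / 7 := by linarith
    obtain ⟨l, hl, hmain⟩ := main (δ / 7) hε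
    set T₀ : ℝ := max 1 (14 * C * l / δ) with hT₀def
    have hT₀pos : (0:ℝ) < T₀ := lt_of_lt_of_le one_pos (le_max_left _ _)
    set S₀ : ℝ := max T₀ (14 * C * T₀ / δ) with hS₀def
    have hS₀T₀ : T₀ ≤ S₀ := le_max_left _ _
    have hclose : ∀ S, S₀ ≤ S → ‖A S - A T₀‖ ≤ 3 * (δ / 7) := by
      intro S hs
      have h1 : T₀ ≤ S := le_trans hS₀T₀ hs
      have hSpos : 0 < S := lt_of_lt_of_le hT₀pos h1
      have hm := hmain S T₀ hT₀pos h1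
      have e1 : 2 * C * l / T₀ ≤ δ / 7 := by
        rw [div_le_div_iff₀ hT₀pos (by norm_num : (0:ℝ) < 7)]
        have h' : 14 * C * l / δ ≤ T₀ := le_max_right _ _
        rw [div_le_iff₀ hδ] at h'
        nlinarith
      have e2 : 2 * C * T₀ / S ≤ δ / 7 := by
        rw [div_le_div_iff₀ hSpos (by norm_num : (0:ℝ) < 7)]
        have h2 : 14 * C * T₀ / δ ≤ S := le_trans (le_max_right _ _) hs
        rw [div_le_iff₀ hδ] at h2
        nlinarith
      linarith
    refine ⟨A '' Ici S₀, image_mem_map (Ici_mem_atTop S₀), ?_⟩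
    rintro x ⟨S, hS, rfl⟩ y ⟨S', hS', rfl⟩
    have c1 := hclose S hS
    have c2 := hclose S' hS'
    calc dist (A S) (A S') ≤ dist (A S) (A T₀) + dist (A T₀) (A S') := dist_triangle _ _ _
      _ = ‖A S - A T₀‖ + ‖A S' - A T₀‖ := by
          rw [dist_eq_norm, dist_eq_norm, norm_sub_rev (A T₀)]
      _ < δ := by linarith
  obtain ⟨M, hM⟩ := CompleteSpace.complete hcauchy
  exact ⟨M, hM⟩
end

section
/- Uniqueness of AP asymmetric factorization: if φ ∈ GAP admits two AP asymmetric factorizations φ = φ₋^{(1)} e_{λ₁} φ_e^{(1)} = φ₋^{(2)} e_{λ₂} φ_e^{(2)}, then λ₁ = λ₂ and there exists γ ∈ ℂ∖{0} with φ₋^{(1)} = γ φ₋^{(2)} and φ_e^{(1)} = γ^{-1} φ_e^{(2)}. -/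
open Filter Set

/-- `p` is a trigonometric polynomial with frequencies in `S`:
`p x = ∑ n, c n * exp (i * λ n * x)` with all `λ n ∈ S`. -/
def IsTrigPoly (S : Set ℝ) (p : ℝ → ℂ) : Prop :=
  ∃ (N : ℕ) (c : Fin N → ℂ) (lam : Fin N → ℝ), (∀ n, lam n ∈ S) ∧
    ∀ x : ℝ, p x = ∑ n : Fin N, c n * Complex.exp (Complex.I * (lam n) * x)

/-- The uniform closure of the trigonometric polynomials with frequencies in `S`.
For `S = univ` this is the algebra `AP` of almost periodic functions, i.e. the smallest
closed subalgebra of `L^∞(ℝ)` containing all the exponentials `e_λ`, `λ ∈ ℝ`. -/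
def APin (S : Set ℝ) : Set (ℝ → ℂ) :=
  {φ | ∃ p : ℕ → ℝ → ℂ, (∀ n, IsTrigPoly S (p n)) ∧ TendstoUniformly p φ atTop}

/-- The algebra `AP` of almost periodic functions. -/
def AP : Set (ℝ → ℂ) := APin Set.univ

/-- `AP⁻`: the closed subalgebra generated by the exponentials `e_λ` with `λ ≤ 0`. -/
def APminus : Set (ℝ → ℂ) := APin (Set.Iic 0)

/-- `AP⁺`: the closed subalgebra generated by the exponentials `e_λ` with `λ ≥ 0`. -/
def APplus : Set (ℝ → ℂ) := APin (Set.Ici 0)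

/-- `GAP`: the group of invertible elements of the algebra `AP`. -/
def GAP : Set (ℝ → ℂ) := {φ | φ ∈ AP ∧ ∃ ψ ∈ AP, ∀ x, φ x * ψ x = 1}

/-- `GAP⁻`: the group of invertible elements of the algebra `AP⁻`. -/
def GAPminus : Set (ℝ → ℂ) := {φ | φ ∈ APminus ∧ ∃ ψ ∈ APminus, ∀ x, φ x * ψ x = 1}

/-- `GAP⁺`: the group of invertible elements of the algebra `AP⁺`. -/
def GAPplus : Set (ℝ → ℂ) := {φ | φ ∈ APplus ∧ ∃ ψ ∈ APplus, ∀ x, φ x * ψ x = 1}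

/-- Boundedness of a function `ℝ → ℂ`. -/
def IsBdd (φ : ℝ → ℂ) : Prop := ∃ C : ℝ, ∀ x, ‖φ x‖ ≤ C

/-- `GL^∞(ℝ)`: bounded functions which are invertible with bounded inverse. -/
def GLinf : Set (ℝ → ℂ) := {φ | IsBdd φ ∧ ∃ ψ, IsBdd ψ ∧ ∀ x, φ x * ψ x = 1}

/-- `φ = φ₋ e_λ φ_e` is an AP asymmetric factorization of `φ`:
`φ₋ ∈ GAP⁻`, `φ_e ∈ GL^∞(ℝ)` even. -/
def IsAPAsymFactorization (φ φm : ℝ → ℂ) (l : ℝ) (φe : ℝ → ℂ) : Prop :=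
  φm ∈ GAPminus ∧ φe ∈ GLinf ∧ (∀ x, φe (-x) = φe x) ∧
    ∀ x : ℝ, φ x = φm x * Complex.exp (Complex.I * l * x) * φe x

/-- `Φ = ψ₋ e_{2λ} (ψ̃₋)⁻¹` is an AP antisymmetric factorization of `Φ`: `ψ₋ ∈ GAP⁻`. -/
def IsAPAntisymFactorization (Φ ψm : ℝ → ℂ) (l : ℝ) : Prop :=
  ψm ∈ GAPminus ∧
    ∀ x : ℝ, Φ x = ψm x * Complex.exp (Complex.I * (2 * l) * x) * (ψm (-x))⁻¹

/-!
Dividing the two factorizations, `u = φ₋⁽¹⁾ / φ₋⁽²⁾ ∈ GAP⁻` satisfies `u e_μ = φ_e⁽²⁾ / φ_e⁽¹⁾` with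
`μ = λ₁ - λ₂`; the right-hand side is even, so `u(x) e_{2μ}(x) = u(-x)`. When `μ ≤ 0` (otherwise
pass to `u⁻¹`) the left-hand side lies in `AP⁻` and the right-hand side in `AP⁺`. But `AP⁻ ∩ AP⁺`
consists of constants: every `f ∈ AP⁺` is the boundary value of a bounded holomorphic function `F`
on the upper half-plane (by the Phragmén–Lindelöf maximum principle, the holomorphic extensions of
trigonometric polynomials converge uniformly), and if also `f ∈ AP⁻` then `f̄ ∈ AP⁺` extends to
some `G`; now `F - G` and `i (F + G)` have purely imaginary boundary values, which forces them to
be constant. So `u` is constant, and then `e_{2μ} ≡ 1` gives `μ = 0`.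
-/

open Complex ComplexConjugate

section

variable {S : Set ℝ}

theorem IsTrigPoly.isBdd {p : ℝ → ℂ} (hp : IsTrigPoly S p) : IsBdd p := by
  obtain ⟨N, c, lam, -, hp⟩ := hp
  refine ⟨∑ n, ‖c n‖, fun x => ?_⟩
  rw [hp]
  refine (norm_sum_le _ _).trans (Finset.sum_le_sum fun n _ => ?_)
  simp [norm_exp]

theorem isBdd_of_mem_APin {f : ℝ → ℂ} (hf : f ∈ APin S) : IsBdd f := by
  obtain ⟨p, hp, hpf⟩ := hf
  obtain ⟨n, hn⟩ := (Metric.tendstoUniformly_iff.1 hpf 1 one_pos).exists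
  obtain ⟨C, hC⟩ := (hp n).isBdd
  refine ⟨C + 1, fun x => ?_⟩
  have := hn x
  rw [dist_eq_norm] at this
  linarith [norm_sub_norm_le (f x) (p n x), hC x]

theorem IsTrigPoly.mul (hS : ∀ a ∈ S, ∀ b ∈ S, a + b ∈ S) {p q : ℝ → ℂ}
    (hp : IsTrigPoly S p) (hq : IsTrigPoly S q) : IsTrigPoly S (fun x => p x * q x) := by
  obtain ⟨N, c, a, ha, hp⟩ := hp
  obtain ⟨M, d, b, hb, hq⟩ := hq
  let e := (finProdFinEquiv : Fin N × Fin M ≃ Fin (N * M)).symm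
  refine ⟨N * M, fun k => c (e k).1 * d (e k).2, fun k => a (e k).1 + b (e k).2,
    fun k => hS _ (ha _) _ (hb _), fun x => ?_⟩
  simp only [hp, hq, Finset.sum_mul_sum, ← e.symm.sum_comp, Equiv.apply_symm_apply,
    Fintype.sum_prod_type, ofReal_add]
  refine Finset.sum_congr rfl fun n _ => Finset.sum_congr rfl fun m _ => ?_
  rw [mul_add, add_mul, exp_add]
  ring

theorem mul_mem_APin (hS : ∀ a ∈ S, ∀ b ∈ S, a + b ∈ S) {f g : ℝ → ℂ}
    (hf : f ∈ APin S) (hg : g ∈ APin S) : (fun x => f x * g x) ∈ APin S := by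
  obtain ⟨p, hp, hpf⟩ := hf
  obtain ⟨q, hq, hqg⟩ := hg
  obtain ⟨C, hC⟩ := isBdd_of_mem_APin ⟨p, hp, hpf⟩
  obtain ⟨D, hD⟩ := isBdd_of_mem_APin ⟨q, hq, hqg⟩
  have hpq : TendstoUniformly (fun n x => (p n x, q n x)) (fun x => (f x, g x)) atTop :=
    fun u hu => (hpf.prodMk hqg u hu).diag_of_prod
  have hfg : ∀ x, (f x, g x) ∈ Metric.closedBall 0 (max C D) := fun x => by
    simpa [Prod.norm_def] using max_le_max (hC x) (hD x)
  refine ⟨fun n x => p n x * q n x, fun n => (hp n).mul hS (hq n),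
    (Metric.isBounded_closedBall (x := 0) (r := max C D + 1)).uniformContinuousOn_smul
      |>.comp_tendstoUniformly_eventually ?_ (fun x => Metric.closedBall_subset_closedBall
        (by linarith) (hfg x)) hpq⟩
  filter_upwards [Metric.tendstoUniformly_iff.1 hpq 1 one_pos] with n hn x
  have := dist_triangle_left (p n x, q n x) 0 (f x, g x)
  simp only [Metric.mem_closedBall] at hfg ⊢
  linarith [hn x, hfg x]

theorem exp_mem_APin {ν : ℝ} (hν : ν ∈ S) : (fun x : ℝ => exp (I * ν * x)) ∈ APin S :=
  ⟨fun _ x => exp (I * ν * x), fun _ => ⟨1, fun _ => 1, fun _ => ν, fun _ => hν, by simp⟩,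
    fun _ hu => Eventually.of_forall fun _ _ => refl_mem_uniformity hu⟩

open Pointwise in
theorem comp_neg_mem_APin {f : ℝ → ℂ} (hf : f ∈ APin S) : (fun x => f (-x)) ∈ APin (-S) := by
  obtain ⟨p, hp, hpf⟩ := hf
  refine ⟨fun n x => p n (-x), fun n => ?_, hpf.comp (-·)⟩
  obtain ⟨N, c, lam, hlam, hp⟩ := hp n
  refine ⟨N, c, fun k => -lam k, fun k => by simpa using hlam k, fun x => ?_⟩
  simp [hp]

open Pointwise in
theorem conj_mem_APin {f : ℝ → ℂ} (hf : f ∈ APin S) : (fun x => conj (f x)) ∈ APin (-S) := by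
  obtain ⟨p, hp, hpf⟩ := hf
  refine ⟨fun n x => conj (p n x), fun n => ?_,
    Complex.isometry_conj.uniformContinuous.comp_tendstoUniformly hpf⟩
  obtain ⟨N, c, lam, hlam, hp⟩ := hp n
  refine ⟨N, fun k => conj (c k), fun k => -lam k, fun k => by simpa using hlam k, fun x => ?_⟩
  simp [hp, ← exp_conj]

end

theorem mul_mem_APminus {f g : ℝ → ℂ} (hf : f ∈ APminus) (hg : g ∈ APminus) :
    (fun x => f x * g x) ∈ APminus :=
  mul_mem_APin (fun _ ha _ hb => mem_Iic.2 (add_nonpos ha hb)) hf hg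

theorem mul_mem_GAPminus {f g : ℝ → ℂ} (hf : f ∈ GAPminus) (hg : g ∈ GAPminus) :
    (fun x => f x * g x) ∈ GAPminus := by
  obtain ⟨hf, f', hf', hff'⟩ := hf
  obtain ⟨hg, g', hg', hgg'⟩ := hg
  exact ⟨mul_mem_APminus hf hg, _, mul_mem_APminus hf' hg', fun x => by
    linear_combination g x * g' x * hff' x + hgg' x⟩

def IsBddHolUHP (F : ℂ → ℂ) : Prop :=
  DiffContOnCl ℂ F {z | 0 < z.im} ∧ ∃ C, ∀ z : ℂ, 0 ≤ z.im → ‖F z‖ ≤ C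

namespace IsBddHolUHP

variable {F G : ℂ → ℂ}

theorem add (hF : IsBddHolUHP F) (hG : IsBddHolUHP G) : IsBddHolUHP (F + G) := by
  obtain ⟨hdF, K, hK⟩ := hF
  obtain ⟨hdG, L, hL⟩ := hG
  exact ⟨hdF.add hdG, K + L, fun z hz => (norm_add_le _ _).trans (add_le_add (hK z hz) (hL z hz))⟩

theorem sub (hF : IsBddHolUHP F) (hG : IsBddHolUHP G) : IsBddHolUHP (F - G) := by
  obtain ⟨hdF, K, hK⟩ := hF
  obtain ⟨hdG, L, hL⟩ := hG
  exact ⟨hdF.sub hdG, K + L, fun z hz => (norm_sub_le _ _).trans (add_le_add (hK z hz) (hL z hz))⟩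

theorem neg (hF : IsBddHolUHP F) : IsBddHolUHP (-F) :=
  ⟨hF.1.neg, hF.2.imp fun _ hC z hz => by simpa using hC z hz⟩

theorem const_mul (hF : IsBddHolUHP F) (c : ℂ) : IsBddHolUHP (fun z => c * F z) := by
  obtain ⟨hd, K, hK⟩ := hF
  exact ⟨hd.const_smul c, ‖c‖ * K, fun z hz => by
    rw [norm_mul]; exact mul_le_mul_of_nonneg_left (hK z hz) (norm_nonneg c)⟩

protected theorem exp (hF : IsBddHolUHP F) : IsBddHolUHP (fun z => exp (F z)) := by
  obtain ⟨hd, K, hK⟩ := hF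
  exact ⟨differentiable_exp.comp_diffContOnCl hd, Real.exp K, fun z hz =>
    (norm_exp_le_exp_norm _).trans (Real.exp_le_exp.2 (hK z hz))⟩

theorem norm_le_of_forall_real (hF : IsBddHolUHP F) {C : ℝ} (hC : ∀ x : ℝ, ‖F x‖ ≤ C)
    {z : ℂ} (hz : 0 ≤ z.im) : ‖F z‖ ≤ C := by
  obtain ⟨hd, K, hK⟩ := hF
  have hmaps : MapsTo (I * ·) {w : ℂ | 0 < w.re} {z | 0 < z.im} := fun w hw => by simpa using hw
  have hdiff : DiffContOnCl ℂ (fun w => F (I * w)) {w : ℂ | 0 < w.re} :=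
    hd.comp (differentiable_id.const_mul I).diffContOnCl hmaps
  have hbdd : ∀ w : ℂ, 0 ≤ w.re → ‖F (I * w)‖ ≤ K := fun w hw => hK _ (by simpa using hw)
  have := PhragmenLindelof.right_half_plane_of_bounded_on_real hdiff
    ⟨0, two_pos, 0, Asymptotics.IsBigO.of_bound K <| (eventually_principal.2 fun w hw => by
      simpa using hbdd w (le_of_lt hw)).filter_mono inf_le_right⟩
    (isBoundedUnder_of_eventually_le <| (eventually_ge_atTop 0).mono fun x hx => hbdd x (by simpa))
    (fun x => by simpa [mul_left_comm I] using hC (-x)) (z := -I * z) (by simpa using hz)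
  simpa [← mul_assoc] using this

theorem re_eq_zero_of_forall_real (hF : IsBddHolUHP F) (hre : ∀ x : ℝ, (F x).re = 0)
    {z : ℂ} (hz : 0 ≤ z.im) : (F z).re = 0 := by
  have re_nonpos : ∀ G, IsBddHolUHP G → (∀ x : ℝ, (G x).re = 0) → (G z).re ≤ 0 :=
    fun G hG hGre => by
      simpa [norm_exp] using hG.exp.norm_le_of_forall_real (C := 1) (by simp [norm_exp, hGre]) hz
  have h := re_nonpos (-F) hF.neg (by simpa using hre)
  simp only [Pi.neg_apply, neg_re, neg_nonpos] at h
  linarith [re_nonpos F hF hre]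

theorem eq_of_forall_re_eq_zero (hF : IsBddHolUHP F) (hre : ∀ x : ℝ, (F x).re = 0) (x y : ℝ) :
    F x = F y := by
  have hU : IsOpen {z : ℂ | 0 < z.im} := isOpen_im_gt 0
  -- By the open mapping theorem, since `F` maps the open half-plane into the imaginary axis.
  obtain ⟨c, hc⟩ : ∃ c, ∀ z ∈ {z : ℂ | 0 < z.im}, F z = c := by
    refine ((hF.1.differentiableOn.analyticOnNhd hU).is_constant_or_isOpen
      (convex_halfSpace_im_gt 0).isPreconnected).resolve_right fun hopen => ?_
    obtain ⟨ε, hε, hball⟩ := Metric.isOpen_iff.1 (hopen _ subset_rfl hU) (F I) ⟨I, by simp, rfl⟩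
    obtain ⟨z, hz, hFz⟩ := hball (show F I + (ε / 2 : ℝ) ∈ Metric.ball (F I) ε by
      simp [abs_of_pos hε, hε])
    have := hF.re_eq_zero_of_forall_real hre (le_of_lt hz)
    rw [hFz, add_re, hF.re_eq_zero_of_forall_real hre (by simp)] at this
    simp [hε.ne'] at this
  have hcl : EqOn F (fun _ => c) (closure {z : ℂ | 0 < z.im}) :=
    EqOn.of_subset_closure hc hF.1.continuousOn continuousOn_const subset_closure subset_rfl
  rw [closure_setOfPred_lt_im] at hcl
  rw [hcl (show (0 : ℝ) ≤ (x : ℂ).im by simp), hcl (show (0 : ℝ) ≤ (y : ℂ).im by simp)]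

end IsBddHolUHP

theorem IsBddHolUHP.of_tendstoUniformlyOn {ι : Type*} {l : Filter ι} [l.NeBot]
    {P : ι → ℂ → ℂ} {F : ℂ → ℂ}
    (hP : ∀ i, IsBddHolUHP (P i)) (h : TendstoUniformlyOn P F l {z | 0 ≤ z.im}) :
    IsBddHolUHP F := by
  refine ⟨⟨?_, ?_⟩, ?_⟩
  · exact (h.mono fun z (hz : 0 < z.im) => hz.le).tendstoLocallyUniformlyOn.differentiableOn
      (Eventually.of_forall fun i => (hP i).1.differentiableOn) (isOpen_im_gt 0)
  · rw [closure_setOfPred_lt_im]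
    exact h.continuousOn (Eventually.of_forall fun i => by
      simpa using (hP i).1.continuousOn).frequently
  · obtain ⟨i, hi⟩ := (Metric.tendstoUniformlyOn_iff.1 h 1 one_pos).exists
    obtain ⟨C, hC⟩ := (hP i).2
    refine ⟨C + 1, fun z hz => ?_⟩
    have := hi z hz
    rw [dist_eq_norm] at this
    linarith [norm_sub_norm_le (F z) (P i z), hC z hz]

theorem IsBddHolUHP.uniformCauchySeqOn {P : ℕ → ℂ → ℂ} (hP : ∀ n, IsBddHolUHP (P n))
    (h : UniformCauchySeqOn (fun n (x : ℝ) => P n x) atTop univ) :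
    UniformCauchySeqOn P atTop {z | 0 ≤ z.im} := by
  rw [Metric.uniformCauchySeqOn_iff] at h ⊢
  intro ε hε
  obtain ⟨N, hN⟩ := h (ε / 2) (half_pos hε)
  refine ⟨N, fun m hm n hn z hz => ?_⟩
  rw [dist_eq_norm]
  calc ‖P m z - P n z‖ ≤ ε / 2 := ((hP m).sub (hP n)).norm_le_of_forall_real
        (fun x => by simpa [dist_eq_norm] using (hN m hm n hn x trivial).le) hz
    _ < ε := half_lt_self hε

theorem exists_isBddHolUHP_of_isTrigPoly {p : ℝ → ℂ} (hp : IsTrigPoly (Ici 0) p) :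
    ∃ P, IsBddHolUHP P ∧ ∀ x : ℝ, P x = p x := by
  obtain ⟨N, c, lam, hlam, hp⟩ := hp
  refine ⟨fun z => ∑ n, c n * exp (I * lam n * z),
    ⟨Differentiable.diffContOnCl (by fun_prop), ∑ n, ‖c n‖, fun z hz => ?_⟩, fun x => (hp x).symm⟩
  refine (norm_sum_le _ _).trans (Finset.sum_le_sum fun n _ => ?_)
  have : (I * lam n * z).re ≤ 0 := by simpa using mul_nonneg (mem_Ici.1 (hlam n)) hz
  simpa [norm_exp] using mul_le_of_le_one_right (norm_nonneg (c n)) (Real.exp_le_one_iff.2 this)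

theorem exists_isBddHolUHP_of_mem_APplus {v : ℝ → ℂ} (hv : v ∈ APplus) :
    ∃ F, IsBddHolUHP F ∧ ∀ x : ℝ, F x = v x := by
  obtain ⟨p, hp, hpv⟩ := hv
  choose P hP hPp using fun n => exists_isBddHolUHP_of_isTrigPoly (hp n)
  have hcauchy : UniformCauchySeqOn P atTop {z | 0 ≤ z.im} :=
    IsBddHolUHP.uniformCauchySeqOn hP <| by
      simpa [hPp] using (tendstoUniformlyOn_univ.2 hpv).uniformCauchySeqOn
  choose! F hF using fun z (hz : z ∈ {z : ℂ | 0 ≤ z.im}) =>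
    cauchySeq_tendsto_of_complete (hcauchy.cauchySeq hz)
  refine ⟨F, .of_tendstoUniformlyOn hP (hcauchy.tendstoUniformlyOn_of_tendsto hF), fun x => ?_⟩
  exact tendsto_nhds_unique (hF x (by simp)) (by simpa [hPp] using hpv.tendsto_at x)

theorem eq_of_mem_APminus_of_mem_APplus {f : ℝ → ℂ} (hm : f ∈ APminus) (hp : f ∈ APplus)
    (x : ℝ) : f x = f 0 := by
  obtain ⟨F, hF, hFf⟩ := exists_isBddHolUHP_of_mem_APplus hp
  obtain ⟨G, hG, hGf⟩ := exists_isBddHolUHP_of_mem_APplus (by simpa [APplus] using conj_mem_APin hm)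
  have h₁ := (hF.sub hG).eq_of_forall_re_eq_zero (fun x => by simp [hFf, hGf]) x 0
  have h₂ := ((hF.add hG).const_mul I).eq_of_forall_re_eq_zero (fun x => by simp [hFf, hGf]) x 0
  simp only [Pi.sub_apply, Pi.add_apply, hFf, hGf] at h₁ h₂
  linear_combination (h₁ + mul_left_cancel₀ I_ne_zero h₂) / 2

theorem eq_zero_of_forall_exp_eq_one {ν : ℝ} (h : ∀ x : ℝ, exp (I * ν * x) = 1) : ν = 0 := by
  by_contra hν
  have := h (Real.pi / ν)
  have hν' : (ν : ℂ) ≠ 0 := ofReal_ne_zero.2 hν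
  rw [show I * ν * ((Real.pi / ν : ℝ) : ℂ) = Real.pi * I by push_cast; field_simp,
    exp_pi_mul_I] at this
  norm_num at this

theorem eq_of_mul_exp_eq_comp_neg {u : ℝ → ℂ} (hu : u ∈ APminus) {ν : ℝ} (hν : ν ≤ 0)
    (h : ∀ x : ℝ, u x * exp (I * ν * x) = u (-x)) (x : ℝ) : u x = u 0 := by
  have hm : (fun x => u (-x)) ∈ APminus := by
    simpa only [h] using mul_mem_APminus hu (exp_mem_APin (mem_Iic.2 hν))
  have hp : (fun x => u (-x)) ∈ APplus := by simpa [APplus] using comp_neg_mem_APin hu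
  simpa using eq_of_mem_APminus_of_mem_APplus hm hp (-x)

theorem eq_zero_of_mul_exp_eq_comp_neg {u : ℝ → ℂ} (hu : u ∈ APminus) (hu0 : u 0 ≠ 0) {ν : ℝ}
    (hν : ν ≤ 0) (h : ∀ x : ℝ, u x * exp (I * ν * x) = u (-x)) : ν = 0 := by
  have hconst := eq_of_mul_exp_eq_comp_neg hu hν h
  refine eq_zero_of_forall_exp_eq_one fun x => mul_left_cancel₀ hu0 ?_
  simpa [hconst x, hconst (-x)] using h x

theorem eq_zero_and_eq_of_mul_exp_eq_comp_neg {u : ℝ → ℂ} (hu : u ∈ GAPminus) {ν : ℝ}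
    (h : ∀ x : ℝ, u x * exp (I * ν * x) = u (-x)) : ν = 0 ∧ ∀ x, u x = u 0 := by
  obtain ⟨hu, w, hw, huw⟩ := hu
  have hν : ν = 0 := by
    rcases le_total ν 0 with hν | hν
    · exact eq_zero_of_mul_exp_eq_comp_neg hu (left_ne_zero_of_mul_eq_one (huw 0)) hν h
    · have hw' : ∀ x : ℝ, w x * exp (I * (-ν : ℝ) * x) = w (-x) := fun x => by
        have hexp : exp (I * ν * x) * exp (I * (-ν : ℝ) * x) = 1 := by
          rw [← exp_add, ← exp_zero]; push_cast; ring_nf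
        have hinv := huw (-x)
        rw [← h x] at hinv
        linear_combination -(w x * exp (I * (-ν : ℝ) * x)) * hinv +
          w (-x) * (exp (I * ν * x) * exp (I * (-ν : ℝ) * x)) * huw x + w (-x) * hexp
      exact neg_eq_zero.1 <| eq_zero_of_mul_exp_eq_comp_neg hw
        (right_ne_zero_of_mul_eq_one (huw 0)) (neg_nonpos.2 hν) hw'
  exact ⟨hν, eq_of_mul_exp_eq_comp_neg hu hν.le (by simpa [hν] using h)⟩

theorem mul_exp_eq_comp_neg_of_even {a b c : ℝ → ℂ} {μ : ℝ} (hb : Function.Even b)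
    (hc : Function.Even c) (hb0 : ∀ x, b x ≠ 0) (h : ∀ x : ℝ, a x * exp (I * μ * x) * b x = c x)
    (x : ℝ) : a x * exp (I * (2 * μ : ℝ) * x) = a (-x) := by
  have hx := h x
  rw [← hc, ← h, hb] at hx
  have hexp : exp (I * (2 * μ : ℝ) * x) = exp (I * μ * x) * exp (I * μ * x) := by
    rw [← exp_add]; push_cast; ring_nf
  have hexp' : exp (I * μ * x) * exp (I * μ * (-x : ℝ)) = 1 := by
    rw [← exp_add, ← exp_zero]; push_cast; ring_nf
  rw [hexp]
  linear_combination exp (I * μ * x) * mul_right_cancel₀ (hb0 x) hx + a (-x) * hexp'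

theorem apAsymFactorization_unique_general (φ : ℝ → ℂ)
    (φm₁ φe₁ φm₂ φe₂ : ℝ → ℂ) (l₁ l₂ : ℝ)
    (h₁ : IsAPAsymFactorization φ φm₁ l₁ φe₁)
    (h₂ : IsAPAsymFactorization φ φm₂ l₂ φe₂) :
    l₁ = l₂ ∧ ∃ γ : ℂ, γ ≠ 0 ∧ (∀ x, φm₁ x = γ * φm₂ x) ∧ ∀ x, φe₁ x = γ⁻¹ * φe₂ x := by
  obtain ⟨hm₁, ⟨-, ψe₁, -, hψe₁⟩, heven₁, hφ₁⟩ := h₁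
  obtain ⟨⟨hm₂, ψ₂, hψ₂, hmψ₂⟩, -, heven₂, hφ₂⟩ := h₂
  set u : ℝ → ℂ := fun x => φm₁ x * ψ₂ x
  have hu : u ∈ GAPminus :=
    mul_mem_GAPminus hm₁ ⟨hψ₂, φm₂, hm₂, fun x => by rw [mul_comm, hmψ₂]⟩
  have hquot : ∀ x : ℝ, u x * exp (I * (l₁ - l₂ : ℝ) * x) * φe₁ x = φe₂ x := fun x => by
    have hexp : exp (I * (l₁ - l₂ : ℝ) * x) * exp (I * l₂ * x) = exp (I * l₁ * x) := by
      rw [← exp_add]; push_cast; ring_nf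
    refine mul_left_cancel₀ (exp_ne_zero (I * l₂ * x)) ?_
    linear_combination φm₁ x * ψ₂ x * φe₁ x * hexp + ψ₂ x * ((hφ₁ x).symm.trans (hφ₂ x)) +
      exp (I * l₂ * x) * φe₂ x * hmψ₂ x
  obtain ⟨hl, hconst⟩ := eq_zero_and_eq_of_mul_exp_eq_comp_neg hu <|
    mul_exp_eq_comp_neg_of_even heven₁ heven₂ (fun x => left_ne_zero_of_mul_eq_one (hψe₁ x)) hquot
  have hγ : u 0 ≠ 0 := by
    obtain ⟨-, w, -, huw⟩ := hu
    exact left_ne_zero_of_mul_eq_one (huw 0)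
  refine ⟨by linarith, u 0, hγ, fun x => ?_, fun x => ?_⟩
  · rw [← hconst x]
    linear_combination -φm₁ x * hmψ₂ x
  · rw [eq_inv_mul_iff_mul_eq₀ hγ, ← hconst x]
    simpa [show l₁ - l₂ = 0 by linarith] using hquot x

/-- Uniqueness (up to a nonzero constant) of the AP asymmetric factorization. -/
theorem apAsymFactorization_unique (φ : ℝ → ℂ) (hφ : φ ∈ GAP)
    (φm₁ φe₁ φm₂ φe₂ : ℝ → ℂ) (l₁ l₂ : ℝ)
    (h₁ : IsAPAsymFactorization φ φm₁ l₁ φe₁)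
    (h₂ : IsAPAsymFactorization φ φm₂ l₂ φe₂) :
    l₁ = l₂ ∧ ∃ γ : ℂ, γ ≠ 0 ∧ (∀ x, φm₁ x = γ * φm₂ x) ∧ ∀ x, φe₁ x = γ⁻¹ * φe₂ x :=
  apAsymFactorization_unique_general φ φm₁ φe₁ φm₂ φe₂ l₁ l₂ h₁ h₂
end
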